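/- arXiv:2504.13727 — 3 statements merged into one kernel-verified Lean document; each statement's English description precedes it below -/
import Mathlib

section
/- Low-rank suppression, quantitatively: ‖z_a‖ = 1/σ_k and ‖x_a‖ ≥ 1 − (1 + ‖W₁‖)/σ_k; consequently, if σ_k > 1 + ‖W₁‖, then the steady-state response to the aligned input is suppressed relative to the input: ‖z_a‖ ≤ ‖x_a‖ / (σ_k − 1 − ‖W₁‖). -/
open Matrix

/-- A vector of `ℝ^n` regarded as an element of Euclidean space, so that `‖euc x‖`
is the Euclidean (`ℓ²`) norm of `x`. -/
noncomputable def euc {n : ℕ} (x : Fin n → ℝ) : EuclideanSpace ℝ (Fin n) := WithLp.toLp 2 x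

/-- The operator norm of a square matrix acting on Euclidean space by
matrix–vector multiplication. -/
noncomputable def l2OpNorm {n : ℕ} (M : Matrix (Fin n) (Fin n) ℝ) : ℝ :=
  ‖Matrix.toEuclideanCLM (𝕜 := ℝ) M‖

/-!
The response `z_a` is `v_k` scaled by `-1/σ_k`, so its norm is `1/σ_k`. The input `x_a` is the
unit vector `u_k` perturbed by `(W₁ v_k - v_k)/σ_k`, whose norm is at most `(‖W₁‖ + 1)/σ_k`; the
reverse triangle inequality gives the lower bound on `‖x_a‖`, and dividing the two bounds gives
the suppression estimate.
-/

theorem norm_euc_col_eq_one {n : ℕ} {ι : Type*} [Fintype ι] [DecidableEq ι]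
    {A : Matrix (Fin n) ι ℝ} (hA : Aᵀ * A = 1) (k : ι) :
    ‖euc (fun i => A i k)‖ = 1 := by
  have hsq : ‖euc (fun i => A i k)‖ ^ 2 = 1 := by
    rw [← real_inner_self_eq_norm_sq]
    calc ∑ i, A i k * A i k = (Aᵀ * A) k k := by simp [Matrix.mul_apply]
      _ = 1 := by simp [hA]
  exact (pow_eq_one_iff_of_nonneg (norm_nonneg _) two_ne_zero).mp hsq

theorem norm_euc_mulVec_le {n : ℕ} (M : Matrix (Fin n) (Fin n) ℝ) (x : Fin n → ℝ) :
    ‖euc (M *ᵥ x)‖ ≤ l2OpNorm M * ‖euc x‖ :=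
  (Matrix.toEuclideanCLM (𝕜 := ℝ) M).le_opNorm (euc x)

theorem norm_sub_div_le_norm_add_inv_smul_sub {E : Type*} [SeminormedAddCommGroup E]
    [NormedSpace ℝ E] {u v w : E} {σ L : ℝ} (hσ : 0 ≤ σ) (hw : ‖w‖ ≤ L) :
    ‖u‖ - (‖v‖ + L) / σ ≤ ‖u + σ⁻¹ • (w - v)‖ := by
  have hpert : ‖σ⁻¹ • (w - v)‖ ≤ (‖v‖ + L) / σ := by
    rw [norm_smul, Real.norm_of_nonneg (inv_nonneg.mpr hσ), inv_mul_eq_div]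
    gcongr
    calc ‖w - v‖ ≤ ‖w‖ + ‖v‖ := norm_sub_le w v
      _ ≤ ‖v‖ + L := by linarith
  linarith [norm_sub_le_norm_add u (σ⁻¹ • (w - v))]

theorem one_div_le_div_sub_of_one_sub_div_le {a b σ : ℝ} (hσ : 0 < σ) (hbσ : b < σ)
    (ha : 1 - b / σ ≤ a) : 1 / σ ≤ a / (σ - b) := by
  rw [div_le_div_iff₀ hσ (sub_pos.mpr hbσ), one_mul]
  rw [sub_div' hσ.ne', div_le_iff₀ hσ] at ha
  linarith

theorem low_rank_suppression_quantitative_general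
    (N r : ℕ)
    (U V : Matrix (Fin N) (Fin r) ℝ)
    (hU : Uᵀ * U = 1) (hV : Vᵀ * V = 1)
    (σ : Fin r → ℝ) (hσ : ∀ j, 0 < σ j)
    (W₁ : Matrix (Fin N) (Fin N) ℝ)
    (k : Fin r)
    (uk vk xa za : Fin N → ℝ)
    (huk : uk = fun i => U i k) (hvk : vk = fun i => V i k)
    (hxa : xa = uk + (σ k)⁻¹ • (W₁.mulVec vk - vk))
    (hza : za = -((σ k)⁻¹ • vk)) :
    ‖euc za‖ = 1 / σ k ∧
    ‖euc xa‖ ≥ 1 - (1 + l2OpNorm W₁) / σ k ∧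
    (σ k > 1 + l2OpNorm W₁ →
      ‖euc za‖ ≤ ‖euc xa‖ / (σ k - 1 - l2OpNorm W₁)) := by
  have hu : ‖euc uk‖ = 1 := huk ▸ norm_euc_col_eq_one hU k
  have hv : ‖euc vk‖ = 1 := hvk ▸ norm_euc_col_eq_one hV k
  have hz : ‖euc za‖ = 1 / σ k := by
    have hz_euc : euc za = -((σ k)⁻¹ • euc vk) := by rw [hza]; rfl
    rw [hz_euc, norm_neg, norm_smul, hv, mul_one, Real.norm_of_nonneg (inv_nonneg.mpr (hσ k).le),
      one_div]
  have hx : 1 - (1 + l2OpNorm W₁) / σ k ≤ ‖euc xa‖ := by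
    have hWv : ‖euc (W₁ *ᵥ vk)‖ ≤ l2OpNorm W₁ := by
      simpa [hv] using norm_euc_mulVec_le W₁ vk
    have hx_euc : euc xa = euc uk + (σ k)⁻¹ • (euc (W₁ *ᵥ vk) - euc vk) := by rw [hxa]; rfl
    calc 1 - (1 + l2OpNorm W₁) / σ k = ‖euc uk‖ - (‖euc vk‖ + l2OpNorm W₁) / σ k := by
          rw [hu, hv]
      _ ≤ ‖euc xa‖ := hx_euc ▸ norm_sub_div_le_norm_add_inv_smul_sub (hσ k).le hWv
  refine ⟨hz, hx, fun hgt => ?_⟩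
  rw [hz, sub_sub]
  exact one_div_le_div_sub_of_one_sub_div_le (hσ k) hgt hx

/-- Low-rank suppression, quantitatively: `‖z_a‖ = 1/σ_k`,
`‖x_a‖ ≥ 1 - (1 + ‖W₁‖)/σ_k`, and if `σ_k > 1 + ‖W₁‖` then
`‖z_a‖ ≤ ‖x_a‖ / (σ_k - 1 - ‖W₁‖)`. -/
theorem low_rank_suppression_quantitative
    (N r : ℕ) (hr : 1 ≤ r) (hNr : r ≤ N)
    (U V : Matrix (Fin N) (Fin r) ℝ)
    (hU : Uᵀ * U = 1) (hV : Vᵀ * V = 1)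
    (σ : Fin r → ℝ) (hσ : ∀ j, 0 < σ j)
    (W₁ : Matrix (Fin N) (Fin N) ℝ)
    (W : Matrix (Fin N) (Fin N) ℝ)
    (hW : W = U * Matrix.diagonal σ * Vᵀ + W₁)
    (k : Fin r)
    (uk vk xa za : Fin N → ℝ)
    (huk : uk = fun i => U i k) (hvk : vk = fun i => V i k)
    (hxa : xa = uk + (σ k)⁻¹ • (W₁.mulVec vk - vk))
    (hza : za = -((σ k)⁻¹ • vk)) :
    ‖euc za‖ = 1 / σ k ∧
    ‖euc xa‖ ≥ 1 - (1 + l2OpNorm W₁) / σ k ∧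
    (σ k > 1 + l2OpNorm W₁ →
      ‖euc za‖ ≤ ‖euc xa‖ / (σ k - 1 - l2OpNorm W₁)) :=
  low_rank_suppression_quantitative_general N r U V hU hV σ hσ W₁ k uk vk xa za huk hvk hxa hza
end

section
/- Quantitative form of the paper's Claim 1 (low-dimensional dynamics require a small singular value of the recurrent alignment matrix): assume σ_k ≥ s for all k = 1,…,r, where s > 0. Let z ∈ ℝ^N with ‖z‖ = 1 and suppose ‖(I − W) z‖ ≤ ε, ‖Uᵀ (W₁ z)‖ ≤ δ, and ‖z − U Uᵀ z‖ ≤ η. Then the vector y = Uᵀ z ∈ ℝ^r satisfies ‖y‖ ≥ 1 − η and ‖P y‖ ≤ (1 + δ + ε)/s + η. In particular, if I − W has an asymptotically small singular value and the perturbation terms ε, δ, η are small, then P = VᵀU has an asymptotically small singular value. -/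
/-!
Write `y = Uᵀ z`. Since `U` is an isometry, `‖U y‖ = ‖y‖`, so `‖y‖ ≥ ‖z‖ - ‖z - U Uᵀ z‖ ≥ 1 - η`,
while `Uᵀ` is a contraction, so `‖y‖ ≤ 1`. Projecting the near-fixed-point equation `z ≈ W z`
with `Uᵀ` and using `Uᵀ U = 1` gives `y ≈ Σ Vᵀ z + Uᵀ W₁ z`, hence `s ‖Vᵀ z‖ ≤ ‖Σ Vᵀ z‖ ≤ 1 + δ + ε`.
Finally `P y = Vᵀ z - Vᵀ (z - U Uᵀ z)`, and `Vᵀ` is a contraction as well.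
-/

open Matrix

section EuclideanNorm

variable {m n : ℕ}

@[simp]
lemma euc_sub (x w : Fin n → ℝ) : euc (x - w) = euc x - euc w := rfl

lemma inner_euc (x w : Fin n → ℝ) : inner ℝ (euc x) (euc w) = x ⬝ᵥ w := by
  simp [euc, EuclideanSpace.inner_toLp_toLp, dotProduct_comm]

lemma norm_euc_sq (x : Fin n → ℝ) : ‖euc x‖ ^ 2 = x ⬝ᵥ x := by
  rw [← real_inner_self_eq_norm_sq, inner_euc]

lemma mulVec_dotProduct (A : Matrix (Fin m) (Fin n) ℝ) (x : Fin n → ℝ) (w : Fin m → ℝ) :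
    (A *ᵥ x) ⬝ᵥ w = x ⬝ᵥ (Aᵀ *ᵥ w) := by
  rw [dotProduct_comm, dotProduct_mulVec, ← mulVec_transpose, dotProduct_comm]

lemma norm_euc_mulVec_of_transpose_mul_self {A : Matrix (Fin m) (Fin n) ℝ} (hA : Aᵀ * A = 1)
    (x : Fin n → ℝ) : ‖euc (A *ᵥ x)‖ = ‖euc x‖ := by
  rw [← sq_eq_sq₀ (norm_nonneg _) (norm_nonneg _), norm_euc_sq, norm_euc_sq, mulVec_dotProduct,
    mulVec_mulVec, hA, one_mulVec]

/-- Cauchy–Schwarz: `‖Aᵀ x‖² = ⟪x, A Aᵀ x⟫ ≤ ‖x‖ ‖A Aᵀ x‖ = ‖x‖ ‖Aᵀ x‖`. -/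
lemma norm_euc_transpose_mulVec_le {A : Matrix (Fin m) (Fin n) ℝ} (hA : Aᵀ * A = 1)
    (x : Fin m → ℝ) : ‖euc (Aᵀ *ᵥ x)‖ ≤ ‖euc x‖ := by
  have hsq : ‖euc (Aᵀ *ᵥ x)‖ ^ 2 ≤ ‖euc x‖ * ‖euc (Aᵀ *ᵥ x)‖ :=
    calc ‖euc (Aᵀ *ᵥ x)‖ ^ 2 = inner ℝ (euc x) (euc (A *ᵥ (Aᵀ *ᵥ x))) := by
          rw [norm_euc_sq, mulVec_dotProduct, transpose_transpose, inner_euc]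
      _ ≤ ‖euc x‖ * ‖euc (A *ᵥ (Aᵀ *ᵥ x))‖ := real_inner_le_norm _ _
      _ = ‖euc x‖ * ‖euc (Aᵀ *ᵥ x)‖ := by rw [norm_euc_mulVec_of_transpose_mul_self hA]
  nlinarith [norm_nonneg (euc (Aᵀ *ᵥ x)), norm_nonneg (euc x)]

lemma mul_norm_euc_le_norm_euc_diagonal_mulVec {σ : Fin n → ℝ} {s : ℝ} (hs : 0 ≤ s)
    (hσs : ∀ j, s ≤ |σ j|) (x : Fin n → ℝ) :
    s * ‖euc x‖ ≤ ‖euc (diagonal σ *ᵥ x)‖ := by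
  rw [← sq_le_sq₀ (by positivity) (norm_nonneg _), mul_pow, norm_euc_sq, norm_euc_sq,
    dotProduct, dotProduct, Finset.mul_sum]
  simp only [mulVec_diagonal]
  refine Finset.sum_le_sum fun i _ ↦ ?_
  have hsσ : s ^ 2 ≤ σ i ^ 2 := sq_abs (σ i) ▸ pow_le_pow_left₀ hs (hσs i) 2
  nlinarith [mul_self_nonneg (x i)]

end EuclideanNorm

lemma norm_euc_mulVec_transpose_mulVec_le {N r k : ℕ} {U : Matrix (Fin N) (Fin r) ℝ}
    (hU : Uᵀ * U = 1) (D : Matrix (Fin r) (Fin k) ℝ) (V : Matrix (Fin N) (Fin k) ℝ)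
    (W₁ : Matrix (Fin N) (Fin N) ℝ) (z : Fin N → ℝ) :
    ‖euc (D *ᵥ (Vᵀ *ᵥ z))‖ ≤ ‖euc (Uᵀ *ᵥ z)‖ + ‖euc (Uᵀ *ᵥ (W₁ *ᵥ z))‖ +
      ‖euc ((1 - (U * D * Vᵀ + W₁)) *ᵥ z)‖ := by
  set e := (1 - (U * D * Vᵀ + W₁)) *ᵥ z
  have hproj : D *ᵥ (Vᵀ *ᵥ z) = Uᵀ *ᵥ z - Uᵀ *ᵥ (W₁ *ᵥ z) - Uᵀ *ᵥ e := by
    simp only [e, sub_mulVec, add_mulVec, one_mulVec, mulVec_sub, mulVec_add, mulVec_mulVec,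
      ← Matrix.mul_assoc, hU, Matrix.one_mul]
    abel
  calc ‖euc (D *ᵥ (Vᵀ *ᵥ z))‖
      ≤ ‖euc (Uᵀ *ᵥ z)‖ + ‖euc (Uᵀ *ᵥ (W₁ *ᵥ z))‖ + ‖euc (Uᵀ *ᵥ e)‖ := by
        rw [hproj, euc_sub, euc_sub]
        exact (norm_sub_le _ _).trans (by gcongr; exact norm_sub_le _ _)
    _ ≤ _ := by gcongr; exact norm_euc_transpose_mulVec_le hU e

theorem claim_one_quantitative_general
    (N r : ℕ)
    (U V : Matrix (Fin N) (Fin r) ℝ)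
    (hU : Uᵀ * U = 1) (hV : Vᵀ * V = 1)
    (σ : Fin r → ℝ)
    (W₁ : Matrix (Fin N) (Fin N) ℝ)
    (W : Matrix (Fin N) (Fin N) ℝ)
    (hW : W = U * Matrix.diagonal σ * Vᵀ + W₁)
    (P : Matrix (Fin r) (Fin r) ℝ) (hP : P = Vᵀ * U)
    (s : ℝ) (hs : 0 < s) (hσs : ∀ j, s ≤ σ j)
    (ε δ η : ℝ)
    (z : Fin N → ℝ) (hz : ‖euc z‖ = 1)
    (hε : ‖euc ((1 - W).mulVec z)‖ ≤ ε)
    (hδ : ‖euc (Uᵀ.mulVec (W₁.mulVec z))‖ ≤ δ)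
    (hη : ‖euc (z - (U * Uᵀ).mulVec z)‖ ≤ η)
    (y : Fin r → ℝ) (hy : y = Uᵀ.mulVec z) :
    ‖euc y‖ ≥ 1 - η ∧ ‖euc (P.mulVec y)‖ ≤ (1 + δ + ε) / s + η := by
  subst hW hP hy
  have hy_le : ‖euc (Uᵀ *ᵥ z)‖ ≤ 1 := hz ▸ norm_euc_transpose_mulVec_le hU z
  have hVz : s * ‖euc (Vᵀ *ᵥ z)‖ ≤ 1 + δ + ε :=
    calc s * ‖euc (Vᵀ *ᵥ z)‖ ≤ ‖euc (diagonal σ *ᵥ (Vᵀ *ᵥ z))‖ :=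
          mul_norm_euc_le_norm_euc_diagonal_mulVec hs.le (fun j ↦ (hσs j).trans (le_abs_self _)) _
      _ ≤ 1 + δ + ε := by
          linarith [norm_euc_mulVec_transpose_mulVec_le hU (diagonal σ) V W₁ z]
  have hPy : (Vᵀ * U) *ᵥ (Uᵀ *ᵥ z) = Vᵀ *ᵥ z - Vᵀ *ᵥ (z - (U * Uᵀ) *ᵥ z) := by
    rw [mulVec_sub, sub_sub_cancel, mulVec_mulVec, mulVec_mulVec, Matrix.mul_assoc]
  constructor
  · have hUy : ‖euc ((U * Uᵀ) *ᵥ z)‖ = ‖euc (Uᵀ *ᵥ z)‖ := by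
      rw [← mulVec_mulVec, norm_euc_mulVec_of_transpose_mul_self hU]
    have := norm_sub_norm_le (euc z) (euc ((U * Uᵀ) *ᵥ z))
    rw [← euc_sub, hz, hUy] at this
    linarith
  · calc ‖euc ((Vᵀ * U) *ᵥ (Uᵀ *ᵥ z))‖
        ≤ ‖euc (Vᵀ *ᵥ z)‖ + ‖euc (Vᵀ *ᵥ (z - (U * Uᵀ) *ᵥ z))‖ := by
          rw [hPy, euc_sub]; exact norm_sub_le _ _
      _ ≤ (1 + δ + ε) / s + η := by
          gcongr
          · rw [le_div_iff₀ hs]; linarith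
          · exact (norm_euc_transpose_mulVec_le hV _).trans hη

/-- Quantitative form of Claim 1: low-dimensional dynamics require a small singular
value of the recurrent alignment matrix `P = Vᵀ U`. -/
theorem claim_one_quantitative
    (N r : ℕ) (hr : 1 ≤ r) (hNr : r ≤ N)
    (U V : Matrix (Fin N) (Fin r) ℝ)
    (hU : Uᵀ * U = 1) (hV : Vᵀ * V = 1)
    (σ : Fin r → ℝ) (hσ : ∀ j, 0 < σ j)
    (W₁ : Matrix (Fin N) (Fin N) ℝ)
    (W : Matrix (Fin N) (Fin N) ℝ)
    (hW : W = U * Matrix.diagonal σ * Vᵀ + W₁)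
    (P : Matrix (Fin r) (Fin r) ℝ) (hP : P = Vᵀ * U)
    (s : ℝ) (hs : 0 < s) (hσs : ∀ j, s ≤ σ j)
    (ε δ η : ℝ)
    (z : Fin N → ℝ) (hz : ‖euc z‖ = 1)
    (hε : ‖euc ((1 - W).mulVec z)‖ ≤ ε)
    (hδ : ‖euc (Uᵀ.mulVec (W₁.mulVec z))‖ ≤ δ)
    (hη : ‖euc (z - (U * Uᵀ).mulVec z)‖ ≤ η)
    (y : Fin r → ℝ) (hy : y = Uᵀ.mulVec z) :
    ‖euc y‖ ≥ 1 - η ∧ ‖euc (P.mulVec y)‖ ≤ (1 + δ + ε) / s + η :=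
  claim_one_quantitative_general N r U V hU hV σ W₁ W hW P hP s hs hσs ε δ η z hz hε hδ hη y hy
end

section
/- A modular (block-constant) network with invertible block-mean matrix is EP with column space the span of the population indicators: the range of the linear map x ↦ M x equals the linear span of the indicator vectors {1_1, …, 1_n}, and the range of x ↦ Mᵀ x equals the same span; in particular the column space of M equals its row space. -/
open Matrix

lemma modular_aux (N n : ℕ) (g : Fin N → Fin n) (hg : Function.Surjective g)
    (m : Matrix (Fin n) (Fin n) ℝ) (hm : IsUnit m) :
    LinearMap.range (Matrix.of fun j k => m (g j) (g k)).mulVecLin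
      = Submodule.span ℝ
          (Set.range (fun a => fun j => if g j = a then (1:ℝ) else 0)) := by
  apply le_antisymm
  · rintro _ ⟨x, rfl⟩
    have hx : (Matrix.of fun j k => m (g j) (g k)).mulVecLin x
        = ∑ b, (∑ k, m b (g k) * x k) •
            (fun j => if g j = b then (1:ℝ) else 0) := by
      funext j
      simp only [mulVecLin_apply, Matrix.mulVec, dotProduct, Matrix.of_apply,
        Finset.sum_apply, Pi.smul_apply, smul_eq_mul, mul_ite, mul_one, mul_zero]
      rw [Finset.sum_ite_eq (Finset.univ) (g j)]
      simp
    rw [hx]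
    exact Submodule.sum_mem _ fun b _ =>
      Submodule.smul_mem _ _ (Submodule.subset_span ⟨b, rfl⟩)
  · rw [Submodule.span_le]
    rintro _ ⟨a, rfl⟩
    have hdet : IsUnit m.det := (Matrix.isUnit_iff_isUnit_det m).mp hm
    set c : Fin n → ℝ := m⁻¹.mulVec (Pi.single a 1) with hc
    choose r hr using hg
    refine ⟨fun k => ∑ b, if k = r b then c b else 0, ?_⟩
    funext j
    have : (Matrix.of fun j k => m (g j) (g k)).mulVecLin
        (fun k => ∑ b, if k = r b then c b else 0) j
        = ∑ b, m (g j) b * c b := by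
      simp only [mulVecLin_apply, Matrix.mulVec, dotProduct, Matrix.of_apply,
        Finset.mul_sum, mul_ite, mul_zero]
      rw [Finset.sum_comm]
      refine Finset.sum_congr rfl fun b _ => ?_
      rw [Finset.sum_ite_eq' (Finset.univ) (r b)]
      simp [hr]
    rw [this]
    have hmc : ∀ b, ∑ d, m b d * c d = (Pi.single a (1:ℝ) : Fin n → ℝ) b := by
      intro b
      have := Matrix.mul_nonsing_inv m hdet
      calc ∑ d, m b d * c d = (m.mulVec (m⁻¹.mulVec (Pi.single a 1))) b := by
            simp [Matrix.mulVec, dotProduct, hc, Pi.single_apply, mul_ite, mul_one, mul_zero, Finset.sum_ite_eq]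
        _ = ((m * m⁻¹).mulVec (Pi.single a 1)) b := by
            rw [Matrix.mulVec_mulVec]
        _ = (Pi.single a (1:ℝ) : Fin n → ℝ) b := by rw [this]; simp [Matrix.one_apply, Pi.single_apply]
    rw [hmc (g j)]
    by_cases h : g j = a <;> simp [h, Pi.single_apply]

/-- A modular (block-constant) network with invertible block-mean matrix is EP, with
column space and row space both equal to the span of the population indicator
vectors. -/
theorem modular_network_is_EP
    (N n : ℕ) (hN : 1 ≤ N) (hn : 1 ≤ n)
    (g : Fin N → Fin n) (hg : Function.Surjective g)
    (m : Matrix (Fin n) (Fin n) ℝ) (hm : IsUnit m)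
    (M : Matrix (Fin N) (Fin N) ℝ)
    (hM : M = Matrix.of fun j k => m (g j) (g k))
    (ind : Fin n → (Fin N → ℝ))
    (hind : ind = fun a => fun j => if g j = a then 1 else 0) :
    LinearMap.range M.mulVecLin = Submodule.span ℝ (Set.range ind) ∧
    LinearMap.range Mᵀ.mulVecLin = Submodule.span ℝ (Set.range ind) := by
  subst hM hind
  constructor
  · exact modular_aux N n g hg m hm
  · have hT : (Matrix.of fun j k => m (g j) (g k))ᵀ
        = Matrix.of fun j k => mᵀ (g j) (g k) := by
      ext j k; rfl
    rw [hT]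
    exact modular_aux N n g hg mᵀ ((Matrix.isUnit_iff_isUnit_det _).mpr
      (by rw [Matrix.det_transpose]; exact (Matrix.isUnit_iff_isUnit_det m).mp hm))
end
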